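/- For every positive integer n, (1/√π) ∫_{−π/t_n}^{π/t_n} exp(−x²·φ(i·x·t_n)) dx = n^n·√(2πn)/(n!·e^n), where t_n = √(2/n) and φ(z) = 2(e^z − 1 − z)/z², φ(0) = 1. -/

import Mathlib

/-!
With `z = i x t` and `t² = 2/n` one has `x² φ(z) = -n (e^z - 1 - z)`, so after the substitution
`θ = x t` the integrand becomes `e^{-n} exp(n e^{iθ} - i n θ)` on `[-π, π]`. That integral is the
Cauchy integral formula for the `n`-th derivative of `exp(n z)` at `0` over the unit circle, which
gives `2π nⁿ / n!`; the remaining constants combine to `√(2πn)`.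
-/

noncomputable def φC (z : ℂ) : ℂ :=
  if z = 0 then 1 else 2 * (Complex.exp z - 1 - z) / z ^ 2

open Complex Real intervalIntegral

theorem integral_exp_const_mul_exp_mul_I_sub (c : ℂ) (m : ℕ) :
    ∫ θ in -π..π, exp (c * exp (θ * I) - m * θ * I) = 2 * π * c ^ m / m.factorial := by
  set f : ℝ → ℂ := fun θ ↦ exp (c * exp (θ * I) - m * θ * I)
  have hf_eq : f = (fun w ↦ exp (c * w) / w ^ m) ∘ circleMap 0 1 := by
    ext θ
    simp only [f, Function.comp_apply, circleMap_zero, ofReal_one, one_mul, Complex.exp_sub,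
      ← Complex.exp_nat_mul]
    ring_nf
  have hf : Function.Periodic f (2 * π) := hf_eq ▸ (periodic_circleMap 0 1).comp _
  have hshift : ∫ θ in -π..π, f θ = ∫ θ in 0..2 * π, f θ := by
    simpa [show -π + 2 * π = π by ring] using hf.intervalIntegral_add_eq (-π) 0
  have hcauchy := (show Differentiable ℂ (fun z ↦ exp (c * z)) by fun_prop).differentiableOn
    |>.circleIntegral_one_div_sub_center_pow_smul (c := 0) one_pos m
  have hpt : ∀ θ : ℝ, deriv (circleMap 0 1) θ •
      (1 / (circleMap 0 1 θ - 0) ^ (m + 1)) • exp (c * circleMap 0 1 θ) = I * f θ := by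
    intro θ
    have he : circleMap 0 1 θ ≠ 0 := by simp [circleMap_zero]
    simp only [hf_eq, deriv_circleMap, sub_zero, smul_eq_mul, Function.comp_apply]
    field_simp
    ring
  simp_rw [circleIntegral, hpt, integral_const_mul, iteratedDeriv_cexp_const_mul, mul_zero,
    Complex.exp_zero, mul_one, smul_eq_mul] at hcauchy
  rw [hshift]
  apply mul_left_cancel₀ I_ne_zero
  rw [hcauchy]
  ring

theorem sq_mul_φC_I_mul (x t : ℂ) (ht : t ≠ 0) :
    x ^ 2 * φC (I * x * t) = -(2 / t ^ 2) * (exp (I * x * t) - 1 - I * x * t) := by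
  rcases eq_or_ne x 0 with rfl | hx
  · simp
  rw [φC, if_neg (by simp [hx, ht])]
  field_simp
  rw [I_sq]
  ring

theorem two_pi_div_sqrt_pi_mul_sqrt_two_div (r : ℝ) :
    2 * π / (√π * √(2 / r)) = √(2 * π * r) := by
  rcases le_or_gt r 0 with hr | hr
  · rw [Real.sqrt_eq_zero'.2 (div_nonpos_of_nonneg_of_nonpos zero_le_two hr),
      Real.sqrt_eq_zero'.2 (mul_nonpos_of_nonneg_of_nonpos (by positivity) hr), mul_zero, div_zero]
  rw [eq_comm, eq_div_iff (by positivity), ← Real.sqrt_mul (by positivity),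
    ← Real.sqrt_mul (by positivity), show 2 * π * r * (π * (2 / r)) = (2 * π) ^ 2 by field_simp,
    Real.sqrt_sq (by positivity)]

theorem g_eq_inv_stirling_ratio (n : ℕ) (hn : 0 < n) :
    (Real.sqrt Real.pi : ℂ)⁻¹ *
        ∫ x in (-(Real.pi / Real.sqrt (2 / n)))..(Real.pi / Real.sqrt (2 / n)),
          Complex.exp (-((x : ℂ) ^ 2 * φC (Complex.I * x * Real.sqrt (2 / n))))
      = ((n : ℂ) ^ n * Real.sqrt (2 * Real.pi * n)) /
          ((Nat.factorial n : ℂ) * Complex.exp n) := by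
  set t := √(2 / n)
  have ht : 0 < t := Real.sqrt_pos.2 (by positivity)
  have htn : 2 / (t : ℂ) ^ 2 = n := by
    rw [← ofReal_pow, Real.sq_sqrt (by positivity)]
    push_cast
    field_simp
  have hintegrand : ∀ x : ℝ, exp (-((x : ℂ) ^ 2 * φC (I * x * t))) =
      exp (-(n : ℂ)) * exp (n * exp ((x * t : ℝ) * I) - n * (x * t : ℝ) * I) := by
    intro x
    rw [sq_mul_φC_I_mul _ _ (ofReal_ne_zero.2 ht.ne'), htn, ← Complex.exp_add]
    push_cast
    ring_nf
  simp_rw [hintegrand]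
  rw [integral_comp_mul_right (fun θ ↦ exp (-(n : ℂ)) * exp (n * exp (θ * I) - n * θ * I)) ht.ne',
    neg_mul, div_mul_cancel₀ _ ht.ne', integral_const_mul, integral_exp_const_mul_exp_mul_I_sub,
    ← two_pi_div_sqrt_pi_mul_sqrt_two_div, Complex.exp_neg, real_smul]
  push_cast
  field_simp
  ring
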